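/- Let b : ℝ³ → ℝ³ be a smooth divergence-free field with b ∈ H³, ∂₁b ∈ H², ∂₃b ∈ H³. Then |∫_{ℝ³} (b·∇b)·∂₁b dx| ≤ C ‖∂₁b‖_{H²}^{3/2} ‖∂₃b‖_{H³}^{1/2} ‖b‖_{H³}. -/

import Mathlib

open MeasureTheory

/-- Partial derivative in the `i`-th coordinate direction on `ℝ³`. -/
noncomputable def pd (i : Fin 3) (f : (Fin 3 → ℝ) → ℝ) : (Fin 3 → ℝ) → ℝ :=
  fun x => fderiv ℝ f x (Pi.single i 1)

/-- Componentwise partial derivative of a vector field on `ℝ³`. -/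
noncomputable def pdv (j : Fin 3) (v : (Fin 3 → ℝ) → Fin 3 → ℝ) :
    (Fin 3 → ℝ) → Fin 3 → ℝ :=
  fun x i => pd j (fun y => v y i) x

/-- The `H^k(ℝ³)` Sobolev norm of a vector field (sum over components of the
`L²` norms of iterated derivatives up to order `k`). -/
noncomputable def HV (k : ℕ) (v : (Fin 3 → ℝ) → Fin 3 → ℝ) : ℝ :=
  ∑ i : Fin 3, ∑ m ∈ Finset.range (k + 1),
    (eLpNorm (fun x => ‖iteratedFDeriv ℝ m (fun y => v y i) x‖) 2 volume).toReal

open ENNReal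

private lemma conj22 : Real.HolderConjugate 2 2 := Real.HolderConjugate.two_two

private lemma half_sq (x : ℝ≥0∞) : (x ^ ((1:ℝ)/2)) ^ (2:ℝ) = x := by
  rw [← ENNReal.rpow_mul]; norm_num

private lemma le_half {x y : ℝ≥0∞} (h : x ^ (2:ℝ) ≤ y) : x ≤ y ^ ((1:ℝ)/2) := by
  have h2 := ENNReal.rpow_le_rpow h (by norm_num : (0:ℝ) ≤ 1/2)
  rwa [← ENNReal.rpow_mul, show (2:ℝ)*(1/2) = 1 by norm_num, ENNReal.rpow_one] at h2

private lemma holder1 {α : Type*} [MeasurableSpace α] (μ : Measure α) {u v : α → ℝ≥0∞}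
    (hu : Measurable u) (hv : Measurable v) :
    ∫⁻ t, u t * v t ∂μ ≤ (∫⁻ t, u t ^ (2:ℝ) ∂μ) ^ ((1:ℝ)/2) * (∫⁻ t, v t ^ (2:ℝ) ∂μ) ^ ((1:ℝ)/2) := by
  simpa using ENNReal.lintegral_mul_le_Lp_mul_Lq μ conj22 hu.aemeasurable hv.aemeasurable

private lemma master {f g h F G H : ℝ → ℝ → ℝ → ℝ≥0∞}
    (mf : Measurable fun p : ℝ × ℝ × ℝ => f p.1 p.2.1 p.2.2)
    (mg : Measurable fun p : ℝ × ℝ × ℝ => g p.1 p.2.1 p.2.2)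
    (mh : Measurable fun p : ℝ × ℝ × ℝ => h p.1 p.2.1 p.2.2)
    (mF : Measurable fun p : ℝ × ℝ × ℝ => F p.1 p.2.1 p.2.2)
    (mG : Measurable fun p : ℝ × ℝ × ℝ => G p.1 p.2.1 p.2.2)
    (mH : Measurable fun p : ℝ × ℝ × ℝ => H p.1 p.2.1 p.2.2)
    (hf : ∀ a b c, f a b c ^ (2:ℝ) ≤ ∫⁻ t, F t b c)
    (hh : ∀ a b c, h a b c ^ (2:ℝ) ≤ ∫⁻ t, H a t c)
    (hg : ∀ a b c, g a b c ^ (2:ℝ) ≤ ∫⁻ t, G a b t) :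
    ∫⁻ c, ∫⁻ b, ∫⁻ a, f a b c * g a b c * h a b c ≤
      (∫⁻ c, ∫⁻ b, ∫⁻ t, F t b c) ^ ((1:ℝ)/2) *
      (∫⁻ b, ∫⁻ a, ∫⁻ t, G a b t) ^ ((1:ℝ)/2) *
      (∫⁻ c, ∫⁻ a, ∫⁻ t, H a t c) ^ ((1:ℝ)/2) := by
  have mA : ∀ c, Measurable fun b => ∫⁻ t, F t b c := by
    intro c
    have h1 : Measurable fun q : ℝ × ℝ => F q.1 q.2 c := by fun_prop
    exact h1.lintegral_prod_left'
  have mBg : ∀ c, Measurable fun b => ∫⁻ a, g a b c ^ (2:ℝ) := by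
    intro c
    have h1 : Measurable fun q : ℝ × ℝ => g q.1 q.2 c ^ (2:ℝ) := by fun_prop
    exact h1.lintegral_prod_left'
  have mP : Measurable fun c => ∫⁻ b, ∫⁻ t, F t b c := by
    have h1 : Measurable fun q : ℝ × ℝ => ∫⁻ t, F t q.1 q.2 := mF.lintegral_prod_left'
    exact h1.lintegral_prod_left'
  have mD : Measurable fun c => ∫⁻ a, ∫⁻ t, H a t c := by
    have h0 : Measurable fun r : ℝ × (ℝ × ℝ) => H r.2.1 r.1 r.2.2 := by fun_prop
    have h1 : Measurable fun q : ℝ × ℝ => ∫⁻ t, H q.1 t q.2 := h0.lintegral_prod_left'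
    exact h1.lintegral_prod_left'
  -- step 1
  have key1 : ∀ b c, ∫⁻ a, f a b c * g a b c * h a b c ≤
      (∫⁻ t, F t b c) ^ ((1:ℝ)/2) *
        ((∫⁻ a, g a b c ^ (2:ℝ)) ^ ((1:ℝ)/2) * (∫⁻ a, h a b c ^ (2:ℝ)) ^ ((1:ℝ)/2)) := by
    intro b c
    calc ∫⁻ a, f a b c * g a b c * h a b c
        ≤ ∫⁻ a, (∫⁻ t, F t b c) ^ ((1:ℝ)/2) * (g a b c * h a b c) := by
          refine lintegral_mono fun a => ?_
          rw [mul_assoc]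
          exact mul_le_mul_left (le_half (hf a b c)) _
      _ = (∫⁻ t, F t b c) ^ ((1:ℝ)/2) * ∫⁻ a, g a b c * h a b c :=
          lintegral_const_mul _ (by fun_prop)
      _ ≤ _ := mul_le_mul_right (holder1 volume (by fun_prop) (by fun_prop)) _
  -- step 2
  have key2 : ∀ c, ∫⁻ b, ∫⁻ a, f a b c * g a b c * h a b c ≤
      (∫⁻ b, ∫⁻ t, F t b c) ^ ((1:ℝ)/2) *
      (∫⁻ b, ∫⁻ a, ∫⁻ t, G a b t) ^ ((1:ℝ)/2) *
      (∫⁻ a, ∫⁻ t, H a t c) ^ ((1:ℝ)/2) := by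
    intro c
    have hBh : ∀ b, (∫⁻ a, h a b c ^ (2:ℝ)) ^ ((1:ℝ)/2) ≤ (∫⁻ a, ∫⁻ t, H a t c) ^ ((1:ℝ)/2) :=
      fun b => ENNReal.rpow_le_rpow (lintegral_mono fun a => hh a b c) (by norm_num)
    calc ∫⁻ b, ∫⁻ a, f a b c * g a b c * h a b c
        ≤ ∫⁻ b, ((∫⁻ t, F t b c) ^ ((1:ℝ)/2) * (∫⁻ a, g a b c ^ (2:ℝ)) ^ ((1:ℝ)/2)) *
            (∫⁻ a, ∫⁻ t, H a t c) ^ ((1:ℝ)/2) := by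
          refine lintegral_mono fun b => (key1 b c).trans ?_
          rw [← mul_assoc]
          exact mul_le_mul_right (hBh b) _
      _ = (∫⁻ b, (∫⁻ t, F t b c) ^ ((1:ℝ)/2) * (∫⁻ a, g a b c ^ (2:ℝ)) ^ ((1:ℝ)/2)) *
            (∫⁻ a, ∫⁻ t, H a t c) ^ ((1:ℝ)/2) :=
          lintegral_mul_const _ (((mA c).pow_const _).mul ((mBg c).pow_const _))
      _ ≤ ((∫⁻ b, ((∫⁻ t, F t b c) ^ ((1:ℝ)/2)) ^ (2:ℝ)) ^ ((1:ℝ)/2) *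
            (∫⁻ b, ((∫⁻ a, g a b c ^ (2:ℝ)) ^ ((1:ℝ)/2)) ^ (2:ℝ)) ^ ((1:ℝ)/2)) *
            (∫⁻ a, ∫⁻ t, H a t c) ^ ((1:ℝ)/2) :=
          mul_le_mul_left
            (holder1 volume ((mA c).pow_const _) ((mBg c).pow_const _)) _
      _ = ((∫⁻ b, ∫⁻ t, F t b c) ^ ((1:ℝ)/2) *
            (∫⁻ b, ∫⁻ a, g a b c ^ (2:ℝ)) ^ ((1:ℝ)/2)) *
            (∫⁻ a, ∫⁻ t, H a t c) ^ ((1:ℝ)/2) := by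
          rw [lintegral_congr fun b => half_sq (∫⁻ t, F t b c),
            lintegral_congr fun b => half_sq (∫⁻ a, g a b c ^ (2:ℝ))]
      _ ≤ _ := by
          refine mul_le_mul_left (mul_le_mul_right ?_ _) _
          exact ENNReal.rpow_le_rpow
            (lintegral_mono fun b => lintegral_mono fun a => hg a b c) (by norm_num)
  -- step 3
  calc ∫⁻ c, ∫⁻ b, ∫⁻ a, f a b c * g a b c * h a b c
      ≤ ∫⁻ c, (∫⁻ b, ∫⁻ t, F t b c) ^ ((1:ℝ)/2) *
          (∫⁻ b, ∫⁻ a, ∫⁻ t, G a b t) ^ ((1:ℝ)/2) *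
          (∫⁻ a, ∫⁻ t, H a t c) ^ ((1:ℝ)/2) := lintegral_mono key2
    _ = ∫⁻ c, (∫⁻ b, ∫⁻ a, ∫⁻ t, G a b t) ^ ((1:ℝ)/2) *
          ((∫⁻ b, ∫⁻ t, F t b c) ^ ((1:ℝ)/2) * (∫⁻ a, ∫⁻ t, H a t c) ^ ((1:ℝ)/2)) :=
        lintegral_congr fun c => by ring
    _ = (∫⁻ b, ∫⁻ a, ∫⁻ t, G a b t) ^ ((1:ℝ)/2) *
          ∫⁻ c, (∫⁻ b, ∫⁻ t, F t b c) ^ ((1:ℝ)/2) * (∫⁻ a, ∫⁻ t, H a t c) ^ ((1:ℝ)/2) :=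
        lintegral_const_mul _ ((mP.pow_const _).mul (mD.pow_const _))
    _ ≤ (∫⁻ b, ∫⁻ a, ∫⁻ t, G a b t) ^ ((1:ℝ)/2) *
          ((∫⁻ c, ((∫⁻ b, ∫⁻ t, F t b c) ^ ((1:ℝ)/2)) ^ (2:ℝ)) ^ ((1:ℝ)/2) *
           (∫⁻ c, ((∫⁻ a, ∫⁻ t, H a t c) ^ ((1:ℝ)/2)) ^ (2:ℝ)) ^ ((1:ℝ)/2)) :=
        mul_le_mul_right (holder1 volume (mP.pow_const _) (mD.pow_const _)) _
    _ = _ := by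
        rw [lintegral_congr fun c => half_sq (∫⁻ b, ∫⁻ t, F t b c),
          lintegral_congr fun c => half_sq (∫⁻ a, ∫⁻ t, H a t c)]
        ring

private lemma sq_le_lint (f f' : ℝ → ℝ) (hd : ∀ s, HasDerivAt f (f' s) s)
    (hc' : Continuous f') (R : ℝ) (hR : ∀ s, R ≤ |s| → f s = 0) (t : ℝ) :
    (‖f t‖₊ : ℝ≥0∞) ^ (2:ℝ) ≤ ∫⁻ s, (2 * ‖f s‖₊ * ‖f' s‖₊ : ℝ≥0∞) := by
  have hc : Continuous f := by
    rw [continuous_iff_continuousAt]; exact fun s => (hd s).continuousAt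
  set a : ℝ := -(|R| + |t| + 1) with ha_def
  have hfa : f a = 0 := by
    apply hR
    have h1 : |a| = |R| + |t| + 1 := by
      rw [ha_def, abs_neg, abs_of_nonneg]; positivity
    have := le_abs_self R
    have := abs_nonneg t
    linarith
  have hat : a ≤ t := by
    have := neg_abs_le t
    have := abs_nonneg R
    rw [ha_def]; linarith
  -- FTC
  have hG : ∀ s ∈ Set.uIcc a t, HasDerivAt (fun y => f y * f y) (f' s * f s + f s * f' s) s :=
    fun s _ => (hd s).mul (hd s)
  have hint : IntervalIntegrable (fun s => f' s * f s + f s * f' s) volume a t :=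
    (((hc'.mul hc).add (hc.mul hc')).intervalIntegrable a t)
  have FTC := intervalIntegral.integral_eq_sub_of_hasDerivAt hG hint
  rw [hfa, mul_zero, sub_zero] at FTC
  -- the compactly supported integrand on ℝ
  set ψ : ℝ → ℝ := fun s => |2 * f s * f' s| with hψ_def
  have hψc : Continuous ψ := (((continuous_const.mul hc).mul hc')).abs
  have hψsupp : HasCompactSupport ψ := by
    apply HasCompactSupport.intro (isCompact_Icc (a := -|R|) (b := |R|))
    intro s hs
    rw [Set.mem_Icc, not_and_or, not_le, not_le] at hs
    have hRs : R ≤ |s| := by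
      have h1 := le_abs_self R
      have h2 := neg_le_abs s
      have h3 := le_abs_self s
      rcases hs with h | h
      · linarith
      · linarith
    simp [hψ_def, hR s hRs]
  have hψint : Integrable ψ volume := hψc.integrable_of_hasCompactSupport hψsupp
  -- main real chain
  have step1 : f t * f t ≤ ∫ s in a..t, ψ s := by
    rw [← FTC]
    have h1 : |∫ s in a..t, f' s * f s + f s * f' s| ≤ ∫ s in a..t, |f' s * f s + f s * f' s| :=
      intervalIntegral.abs_integral_le_integral_abs hat
    have h2 : (∫ s in a..t, |f' s * f s + f s * f' s|) = ∫ s in a..t, ψ s := by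
      apply intervalIntegral.integral_congr
      intro s _
      simp only [hψ_def]
      ring_nf
    calc (∫ s in a..t, f' s * f s + f s * f' s)
        ≤ |∫ s in a..t, f' s * f s + f s * f' s| := le_abs_self _
      _ ≤ ∫ s in a..t, ψ s := by rw [← h2]; exact h1
  have step2 : (∫ s in a..t, ψ s) ≤ ∫ s, ψ s := by
    rw [intervalIntegral.integral_of_le hat]
    have : ∫ s in Set.Ioc a t, ψ s ∂volume ≤ ∫ s, ψ s ∂volume :=
      setIntegral_le_integral hψint
        (Filter.Eventually.of_forall fun s => abs_nonneg _)
    exact this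
  -- convert to lintegral
  have hofreal : ENNReal.ofReal (∫ s, ψ s) = ∫⁻ s, ENNReal.ofReal (ψ s) :=
    ofReal_integral_eq_lintegral_ofReal hψint
      (Filter.Eventually.of_forall fun s => abs_nonneg _)
  have hpt : ∀ s, ENNReal.ofReal (ψ s) = (2 * ‖f s‖₊ * ‖f' s‖₊ : ℝ≥0∞) := by
    intro s
    have : ψ s = ‖2 * f s * f' s‖ := (Real.norm_eq_abs _).symm
    rw [this, ofReal_norm, enorm_eq_nnnorm]
    push_cast [nnnorm_mul]
    norm_num
  have hLHS : (‖f t‖₊ : ℝ≥0∞) ^ (2:ℝ) = ENNReal.ofReal (f t * f t) := by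
    rw [← abs_mul_abs_self (f t), ENNReal.ofReal_mul (abs_nonneg _)]
    have : ENNReal.ofReal |f t| = (‖f t‖₊ : ℝ≥0∞) := by
      rw [← Real.norm_eq_abs, ofReal_norm, enorm_eq_nnnorm]
    rw [this]
    rw [show (2:ℝ) = ((2:ℕ):ℝ) by norm_num, ENNReal.rpow_natCast]
    ring
  calc (‖f t‖₊ : ℝ≥0∞) ^ (2:ℝ) = ENNReal.ofReal (f t * f t) := hLHS
    _ ≤ ENNReal.ofReal (∫ s, ψ s) := ENNReal.ofReal_le_ofReal (step1.trans step2)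
    _ = ∫⁻ s, ENNReal.ofReal (ψ s) := hofreal
    _ = _ := lintegral_congr hpt

private lemma pd_contDiff {f : (Fin 3 → ℝ) → ℝ} (hf : ContDiff ℝ (⊤:ℕ∞) f) (i : Fin 3) :
    ContDiff ℝ (⊤:ℕ∞) (pd i f) :=
  ((contDiff_infty_iff_fderiv.mp hf).2).clm_apply contDiff_const

private lemma pd_supp {f : (Fin 3 → ℝ) → ℝ} (hs : HasCompactSupport f) (i : Fin 3) :
    HasCompactSupport (pd i f) :=
  (hs.fderiv ℝ).comp_left (g := fun L : (Fin 3 → ℝ) →L[ℝ] ℝ => L (Pi.single i 1)) rfl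

private lemma norm_single_le (i : Fin 3) : ‖(Pi.single i (1:ℝ) : Fin 3 → ℝ)‖ ≤ 1 := by
  rw [pi_norm_le_iff_of_nonneg (by norm_num)]
  intro j
  rw [Pi.single_apply]
  split <;> simp

private lemma pd_le_iter {f : (Fin 3 → ℝ) → ℝ} (i : Fin 3) (x : Fin 3 → ℝ) :
    ‖pd i f x‖ ≤ ‖iteratedFDeriv ℝ 1 f x‖ := by
  have h1 : pd i f x = iteratedFDeriv ℝ 1 f x (fun _ => Pi.single i 1) := by
    rw [iteratedFDeriv_one_apply]; rfl
  rw [h1]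
  have h2 := (iteratedFDeriv ℝ 1 f x).le_opNorm (fun _ => Pi.single i 1)
  have h3 : (∏ _j : Fin 1, ‖(Pi.single i (1:ℝ) : Fin 3 → ℝ)‖) ≤ 1 := by
    simpa using norm_single_le i
  calc ‖iteratedFDeriv ℝ 1 f x (fun _ => Pi.single i 1)‖
      ≤ ‖iteratedFDeriv ℝ 1 f x‖ * ∏ _j : Fin 1, ‖(Pi.single i (1:ℝ) : Fin 3 → ℝ)‖ := h2
    _ ≤ ‖iteratedFDeriv ℝ 1 f x‖ * 1 := mul_le_mul_of_nonneg_left h3 (norm_nonneg _)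
    _ = _ := mul_one _

private lemma pd_swap {f : (Fin 3 → ℝ) → ℝ} (hf : ContDiff ℝ (⊤:ℕ∞) f) (i j : Fin 3)
    (x : Fin 3 → ℝ) : pd i (pd j f) x = pd j (pd i f) x := by
  have hdf : ContDiff ℝ (⊤:ℕ∞) (fderiv ℝ f) := (contDiff_infty_iff_fderiv.mp hf).2
  have h2 : DifferentiableAt ℝ (fderiv ℝ f) x :=
    (hdf.differentiable (by norm_num)).differentiableAt
  have key : ∀ k l : Fin 3,
      pd k (pd l f) x = fderiv ℝ (fderiv ℝ f) x (Pi.single k 1) (Pi.single l 1) := by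
    intro k l
    have := fderiv_clm_apply (c := fderiv ℝ f) (u := fun _ => Pi.single l (1:ℝ)) (x := x)
      h2 (differentiableAt_const _)
    show fderiv ℝ (fun y => fderiv ℝ f y (Pi.single l 1)) x (Pi.single k 1) = _
    rw [this]
    simp
  rw [key, key]
  exact second_derivative_symmetric
    (fun y => ((hf.differentiable (by norm_num)) y).hasFDerivAt) h2.hasFDerivAt _ _
private lemma slice_sq {φ : (Fin 3 → ℝ) → ℝ} (hφ : ContDiff ℝ (⊤:ℕ∞) φ)
    (hs : HasCompactSupport φ) (i : Fin 3) (x : Fin 3 → ℝ) :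
    (‖φ x‖₊ : ℝ≥0∞) ^ (2:ℝ) ≤
      ∫⁻ t, (2 * ‖φ (Function.update x i t)‖₊ * ‖pd i φ (Function.update x i t)‖₊ : ℝ≥0∞) := by
  have hφc : Continuous φ := hφ.continuous
  have hpdc : Continuous (pd i φ) :=
    (((contDiff_infty_iff_fderiv.mp hφ).2).clm_apply contDiff_const).continuous
  -- the affine path
  have hupd : ∀ t : ℝ, Function.update x i t = (x - x i • (Pi.single i 1 : Fin 3 → ℝ)) + t • (Pi.single i 1 : Fin 3 → ℝ) := by
    intro t
    funext j
    by_cases hj : j = i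
    · subst hj; simp [Function.update_apply]
    · simp [Function.update_apply, hj, Pi.single_apply]
  have hu : ∀ t : ℝ, HasDerivAt (fun s : ℝ => Function.update x i s)
      (Pi.single i 1 : Fin 3 → ℝ) t := by
    intro t
    have h2 : HasDerivAt (fun s : ℝ =>
        (x - x i • (Pi.single i 1 : Fin 3 → ℝ)) + s • (Pi.single i 1 : Fin 3 → ℝ))
        ((1:ℝ) • (Pi.single i 1 : Fin 3 → ℝ)) t :=
      ((hasDerivAt_id t).smul_const _).const_add _
    rw [one_smul] at h2
    simp only [← hupd] at h2
    exact h2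
  have hd : ∀ t : ℝ, HasDerivAt (fun s => φ (Function.update x i s))
      (pd i φ (Function.update x i t)) t := by
    intro t
    exact ((hφ.differentiable (by norm_num)) _).hasFDerivAt.comp_hasDerivAt t (hu t)
  -- compact support along the slice
  obtain ⟨R, hball⟩ := (hs.isBounded).subset_closedBall 0
  have hvan : ∀ s : ℝ, |R| + 1 ≤ |s| → φ (Function.update x i s) = 0 := by
    intro s hRs
    by_contra hne
    have hmem : Function.update x i s ∈ tsupport φ := subset_tsupport φ (by simpa using hne)
    have hnorm : ‖Function.update x i s‖ ≤ R := by
      have := hball hmem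
      simpa [Metric.mem_closedBall, dist_zero_right] using this
    have h1 : |s| ≤ ‖Function.update x i s‖ := by
      have := norm_le_pi_norm (Function.update x i s) i
      simpa [Function.update_self] using this
    have := le_abs_self R
    linarith
  have key := sq_le_lint (fun s => φ (Function.update x i s))
    (fun s => pd i φ (Function.update x i s)) hd
    (hpdc.comp (continuous_iff_continuousAt.mpr fun t => (hu t).continuousAt)) (|R| + 1) hvan (x i)
  simpa [Function.update_eq_self] using key

noncomputable def e3 : (Fin 3 → ℝ) ≃ᵐ ℝ × ℝ × ℝ :=
  (MeasurableEquiv.piFinSuccAbove (fun _ : Fin 3 => ℝ) 0).trans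
    ((MeasurableEquiv.refl ℝ).prodCongr (MeasurableEquiv.piFinTwo (fun _ : Fin 2 => ℝ)))

private lemma e3_mp : MeasurePreserving e3 volume volume := by
  have h1 := volume_preserving_piFinSuccAbove (fun _ : Fin 3 => ℝ) 0
  have h2 : MeasurePreserving
      (Prod.map (id : ℝ → ℝ) (MeasurableEquiv.piFinTwo (fun _ : Fin 2 => ℝ)))
      volume volume := by
    rw [Measure.volume_eq_prod, Measure.volume_eq_prod]
    exact (MeasurePreserving.id volume).prod (volume_preserving_piFinTwo _)
  have : ⇑e3 = (Prod.map (id : ℝ → ℝ) (MeasurableEquiv.piFinTwo (fun _ : Fin 2 => ℝ))) ∘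
      (MeasurableEquiv.piFinSuccAbove (fun _ : Fin 3 => ℝ) 0) := by
    rfl
  rw [this]
  exact h2.comp h1
  
private lemma e3_apply (x : Fin 3 → ℝ) : e3 x = (x 0, x 1, x 2) := rfl

private lemma e3_symm_comp (p : ℝ × ℝ × ℝ) :
    (e3.symm p) 0 = p.1 ∧ (e3.symm p) 1 = p.2.1 ∧ (e3.symm p) 2 = p.2.2 := by
  have h := e3.apply_symm_apply p
  rw [e3_apply] at h
  rw [Prod.ext_iff, Prod.ext_iff] at h
  exact ⟨h.1, h.2.1, h.2.2⟩

private lemma e3_upd (p : ℝ × ℝ × ℝ) (t : ℝ) :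
    Function.update (e3.symm p) 0 t = e3.symm (t, p.2.1, p.2.2) ∧
    Function.update (e3.symm p) 1 t = e3.symm (p.1, t, p.2.2) ∧
    Function.update (e3.symm p) 2 t = e3.symm (p.1, p.2.1, t) := by
  obtain ⟨h0, h1, h2⟩ := e3_symm_comp p
  refine ⟨?_, ?_, ?_⟩ <;>
  · apply e3.injective
    rw [e3_apply, e3.apply_symm_apply]
    rw [Function.update_apply, Function.update_apply, Function.update_apply]
    norm_num [h0, h1, h2, show (2:Fin 3) ≠ 0 from by decide, show (2:Fin 3) ≠ 1 from by decide,
      show (0:Fin 3) ≠ 2 from by decide, show (1:Fin 3) ≠ 2 from by decide,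
      show (0:Fin 3) ≠ 1 from by decide, show (1:Fin 3) ≠ 0 from by decide]

private lemma lint_pi_eq (Φ : (Fin 3 → ℝ) → ℝ≥0∞) :
    ∫⁻ x, Φ x = ∫⁻ p : ℝ × ℝ × ℝ, Φ (e3.symm p) :=
  ((e3_mp.symm e3).lintegral_comp_emb e3.symm.measurableEmbedding Φ).symm

private lemma lint3_rev (W : ℝ × ℝ × ℝ → ℝ≥0∞) (hW : Measurable W) :
    ∫⁻ p, W p = ∫⁻ c, ∫⁻ b, ∫⁻ a, W (a, b, c) := by
  rw [Measure.volume_eq_prod, lintegral_prod_symm _ hW.aemeasurable]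
  have h1 : Measurable fun q : ℝ × ℝ => ∫⁻ a, W (a, q) := hW.lintegral_prod_left'
  rw [Measure.volume_eq_prod, lintegral_prod_symm _ h1.aemeasurable]

private lemma lint3_nat (W : ℝ × ℝ × ℝ → ℝ≥0∞) (hW : Measurable W) :
    ∫⁻ p, W p = ∫⁻ a, ∫⁻ b, ∫⁻ c, W (a, b, c) := by
  rw [Measure.volume_eq_prod, lintegral_prod _ hW.aemeasurable]
  refine lintegral_congr fun a => ?_
  have h1 : Measurable fun q : ℝ × ℝ => W (a, q) := hW.comp measurable_prodMk_left
  rw [Measure.volume_eq_prod, lintegral_prod _ h1.aemeasurable]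

private lemma lint3_cab (W : ℝ × ℝ × ℝ → ℝ≥0∞) (hW : Measurable W) :
    ∫⁻ p, W p = ∫⁻ c, ∫⁻ a, ∫⁻ b, W (a, b, c) := by
  rw [lint3_rev W hW]
  refine lintegral_congr fun c => ?_
  exact (lintegral_lintegral_swap (f := fun a b => W (a, b, c)) (by fun_prop)).symm

private lemma lint3_bac (W : ℝ × ℝ × ℝ → ℝ≥0∞) (hW : Measurable W) :
    ∫⁻ p, W p = ∫⁻ b, ∫⁻ a, ∫⁻ c, W (a, b, c) := by
  rw [lint3_nat W hW]
  exact lintegral_lintegral_swap (f := fun a b => ∫⁻ c, W (a, b, c)) (by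
    have h1 : Measurable fun r : (ℝ × ℝ) × ℝ => W (r.1.1, r.1.2, r.2) := by fun_prop
    exact (h1.lintegral_prod_right').aemeasurable)

private lemma lint_pair_le {ψ χ : (Fin 3 → ℝ) → ℝ} (hψ : Continuous ψ) (hχ : Continuous χ) :
    ∫⁻ x, (2 * ‖ψ x‖₊ * ‖χ x‖₊ : ℝ≥0∞) ≤ 2 * eLpNorm ψ 2 volume * eLpNorm χ 2 volume := by
  have mψ : Measurable fun x => (‖ψ x‖₊ : ℝ≥0∞) :=
    (ENNReal.continuous_coe.comp hψ.nnnorm).measurable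
  have mχ : Measurable fun x => (‖χ x‖₊ : ℝ≥0∞) :=
    (ENNReal.continuous_coe.comp hχ.nnnorm).measurable
  have h1 : ∀ x, (2 * ‖ψ x‖₊ * ‖χ x‖₊ : ℝ≥0∞) = 2 * ((‖ψ x‖₊ : ℝ≥0∞) * ‖χ x‖₊) :=
    fun x => mul_assoc _ _ _
  rw [lintegral_congr h1, lintegral_const_mul 2 (by fun_prop)]
  have h2 := holder1 volume mψ mχ
  have hsψ : eLpNorm ψ 2 volume = (∫⁻ x, (‖ψ x‖₊ : ℝ≥0∞) ^ (2:ℝ)) ^ ((1:ℝ)/2) := by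
    rw [eLpNorm_eq_lintegral_rpow_enorm_toReal (by norm_num) (by norm_num)]
    norm_num [enorm_eq_nnnorm]
  have hsχ : eLpNorm χ 2 volume = (∫⁻ x, (‖χ x‖₊ : ℝ≥0∞) ^ (2:ℝ)) ^ ((1:ℝ)/2) := by
    rw [eLpNorm_eq_lintegral_rpow_enorm_toReal (by norm_num) (by norm_num)]
    norm_num [enorm_eq_nnnorm]
  rw [mul_assoc, hsψ, hsχ]
  exact mul_le_mul_right h2 2

private lemma trilinear_pi {f g h : (Fin 3 → ℝ) → ℝ}
    (hf : ContDiff ℝ (⊤:ℕ∞) f) (hg : ContDiff ℝ (⊤:ℕ∞) g) (hh : ContDiff ℝ (⊤:ℕ∞) h)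
    (sf : HasCompactSupport f) (sg : HasCompactSupport g) (sh : HasCompactSupport h) :
    ∫⁻ x, ((‖f x‖₊ : ℝ≥0∞) * ‖g x‖₊ * ‖h x‖₊) ≤
      (2 * eLpNorm f 2 volume * eLpNorm (pd 0 f) 2 volume) ^ ((1:ℝ)/2) *
      (2 * eLpNorm g 2 volume * eLpNorm (pd 2 g) 2 volume) ^ ((1:ℝ)/2) *
      (2 * eLpNorm h 2 volume * eLpNorm (pd 1 h) 2 volume) ^ ((1:ℝ)/2) := by
  have mcoe : ∀ {φ : (Fin 3 → ℝ) → ℝ}, Continuous φ → Measurable fun x => (‖φ x‖₊ : ℝ≥0∞) :=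
    fun hφ => (ENNReal.continuous_coe.comp hφ.nnnorm).measurable
  have pdfc : Continuous (pd 0 f) := (pd_contDiff hf 0).continuous
  have pdgc : Continuous (pd 2 g) := (pd_contDiff hg 2).continuous
  have pdhc : Continuous (pd 1 h) := (pd_contDiff hh 1).continuous
  -- pi-side ennreal functions
  set Fpi : (Fin 3 → ℝ) → ℝ≥0∞ := fun x => (2 * ‖f x‖₊ * ‖pd 0 f x‖₊ : ℝ≥0∞) with hFpi
  set Gpi : (Fin 3 → ℝ) → ℝ≥0∞ := fun x => (2 * ‖g x‖₊ * ‖pd 2 g x‖₊ : ℝ≥0∞) with hGpi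
  set Hpi : (Fin 3 → ℝ) → ℝ≥0∞ := fun x => (2 * ‖h x‖₊ * ‖pd 1 h x‖₊ : ℝ≥0∞) with hHpi
  have mFpi : Measurable Fpi := (measurable_const.mul (mcoe hf.continuous)).mul (mcoe pdfc)
  have mGpi : Measurable Gpi := (measurable_const.mul (mcoe hg.continuous)).mul (mcoe pdgc)
  have mHpi : Measurable Hpi := (measurable_const.mul (mcoe hh.continuous)).mul (mcoe pdhc)
  have mW : Measurable fun x => (‖f x‖₊ : ℝ≥0∞) * ‖g x‖₊ * ‖h x‖₊ :=
    ((mcoe hf.continuous).mul (mcoe hg.continuous)).mul (mcoe hh.continuous)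
  -- apply the master inequality
  have key := master
    (f := fun a b c => (‖f (e3.symm (a, b, c))‖₊ : ℝ≥0∞))
    (g := fun a b c => (‖g (e3.symm (a, b, c))‖₊ : ℝ≥0∞))
    (h := fun a b c => (‖h (e3.symm (a, b, c))‖₊ : ℝ≥0∞))
    (F := fun a b c => Fpi (e3.symm (a, b, c)))
    (G := fun a b c => Gpi (e3.symm (a, b, c)))
    (H := fun a b c => Hpi (e3.symm (a, b, c)))
    ((mcoe hf.continuous).comp e3.symm.measurable)
    ((mcoe hg.continuous).comp e3.symm.measurable)
    ((mcoe hh.continuous).comp e3.symm.measurable)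
    (mFpi.comp e3.symm.measurable)
    (mGpi.comp e3.symm.measurable)
    (mHpi.comp e3.symm.measurable)
    (by
      intro a b c
      have h1 := slice_sq hf sf 0 (e3.symm (a, b, c))
      have h2 : ∀ t : ℝ, Function.update (e3.symm (a, b, c)) 0 t = e3.symm (t, b, c) :=
        fun t => (e3_upd (a, b, c) t).1
      simp only [h2] at h1
      exact h1)
    (by
      intro a b c
      have h1 := slice_sq hh sh 1 (e3.symm (a, b, c))
      have h2 : ∀ t : ℝ, Function.update (e3.symm (a, b, c)) 1 t = e3.symm (a, t, c) :=
        fun t => (e3_upd (a, b, c) t).2.1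
      simp only [h2] at h1
      exact h1)
    (by
      intro a b c
      have h1 := slice_sq hg sg 2 (e3.symm (a, b, c))
      have h2 : ∀ t : ℝ, Function.update (e3.symm (a, b, c)) 2 t = e3.symm (a, b, t) :=
        fun t => (e3_upd (a, b, c) t).2.2
      simp only [h2] at h1
      exact h1)
  -- identify the LHS
  have hL : ∫⁻ x, ((‖f x‖₊ : ℝ≥0∞) * ‖g x‖₊ * ‖h x‖₊) =
      ∫⁻ c, ∫⁻ b, ∫⁻ a, (‖f (e3.symm (a, b, c))‖₊ : ℝ≥0∞) * ‖g (e3.symm (a, b, c))‖₊ *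
        ‖h (e3.symm (a, b, c))‖₊ := by
    rw [lint_pi_eq _, lint3_rev (fun p => (‖f (e3.symm p)‖₊ : ℝ≥0∞) * ‖g (e3.symm p)‖₊ *
      ‖h (e3.symm p)‖₊) (mW.comp e3.symm.measurable)]
  have hF : (∫⁻ c, ∫⁻ b, ∫⁻ t, Fpi (e3.symm (t, b, c))) = ∫⁻ x, Fpi x := by
    rw [lint_pi_eq Fpi, lint3_rev (fun p => Fpi (e3.symm p)) (mFpi.comp e3.symm.measurable)]
  have hG : (∫⁻ b, ∫⁻ a, ∫⁻ t, Gpi (e3.symm (a, b, t))) = ∫⁻ x, Gpi x := by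
    rw [lint_pi_eq Gpi, lint3_bac (fun p => Gpi (e3.symm p)) (mGpi.comp e3.symm.measurable)]
  have hH : (∫⁻ c, ∫⁻ a, ∫⁻ t, Hpi (e3.symm (a, t, c))) = ∫⁻ x, Hpi x := by
    rw [lint_pi_eq Hpi, lint3_cab (fun p => Hpi (e3.symm p)) (mHpi.comp e3.symm.measurable)]
  rw [hL]
  refine key.trans ?_
  rw [hF, hG, hH]
  have bF : ∫⁻ x, Fpi x ≤ 2 * eLpNorm f 2 volume * eLpNorm (pd 0 f) 2 volume :=
    lint_pair_le hf.continuous pdfc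
  have bG : ∫⁻ x, Gpi x ≤ 2 * eLpNorm g 2 volume * eLpNorm (pd 2 g) 2 volume :=
    lint_pair_le hg.continuous pdgc
  have bH : ∫⁻ x, Hpi x ≤ 2 * eLpNorm h 2 volume * eLpNorm (pd 1 h) 2 volume :=
    lint_pair_le hh.continuous pdhc
  exact mul_le_mul' (mul_le_mul' (ENNReal.rpow_le_rpow bF (by norm_num))
    (ENNReal.rpow_le_rpow bG (by norm_num))) (ENNReal.rpow_le_rpow bH (by norm_num))

private lemma sqrt8_le : Real.sqrt 8 ≤ 3 := by
  have h9 : Real.sqrt 9 = 3 := by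
    rw [show (9:ℝ) = 3^2 by norm_num, Real.sqrt_sq (by norm_num)]
  calc Real.sqrt 8 ≤ Real.sqrt 9 := Real.sqrt_le_sqrt (by norm_num)
    _ = 3 := h9

private lemma real_final {x y z : ℝ} (hx : 0 ≤ x) (hy : 0 ≤ y) (hz : 0 ≤ z) :
    9 * ((2*z*x) ^ ((1:ℝ)/2) * (2*z*y) ^ ((1:ℝ)/2) * (2*x*x) ^ ((1:ℝ)/2)) ≤
      32 * x ^ ((3:ℝ)/2) * y ^ ((1:ℝ)/2) * z := by
  rw [← Real.sqrt_eq_rpow, ← Real.sqrt_eq_rpow, ← Real.sqrt_eq_rpow, ← Real.sqrt_eq_rpow]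
  have h32 : x ^ ((3:ℝ)/2) = Real.sqrt (x^3) := by
    rw [show ((3:ℝ)/2) = ((3:ℕ):ℝ) * ((1:ℝ)/2) by norm_num, Real.rpow_mul hx,
      Real.rpow_natCast, Real.sqrt_eq_rpow]
  rw [h32]
  have hcomb : Real.sqrt (2*z*x) * Real.sqrt (2*z*y) * Real.sqrt (2*x*x) =
      Real.sqrt 8 * Real.sqrt (x^3 * y * z^2) := by
    rw [← Real.sqrt_mul (by positivity), ← Real.sqrt_mul (by positivity),
      ← Real.sqrt_mul (by norm_num)]
    ring_nf
  rw [hcomb]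
  have hz' : z = Real.sqrt (z^2) := (Real.sqrt_sq hz).symm
  have hrhs : 32 * Real.sqrt (x^3) * Real.sqrt y * z = 32 * Real.sqrt (x^3 * y * z^2) := by
    rw [Real.sqrt_mul (by positivity), Real.sqrt_mul (by positivity)]
    nth_rewrite 1 [hz']
    ring
  rw [hrhs]
  have hs8 := sqrt8_le
  have hsu := Real.sqrt_nonneg (x^3 * y * z^2)
  nlinarith

private lemma sum9_ne_top {f : Fin 3 → ℕ → ℝ≥0∞} {k : ℕ} (h : ∀ i m, f i m ≠ ⊤) :
    (∑ i : Fin 3, ∑ m ∈ Finset.range (k+1), f i m) ≠ ⊤ := by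
  rw [ne_eq, ENNReal.sum_eq_top]
  push_neg
  intro i _
  rw [ne_eq, ENNReal.sum_eq_top]
  push_neg
  intro m _
  exact h i m

private lemma entry_ne_top {φ : (Fin 3 → ℝ) → ℝ} (hφ : ContDiff ℝ (⊤:ℕ∞) φ)
    (hs : HasCompactSupport φ) (m : ℕ) :
    eLpNorm (fun x => ‖iteratedFDeriv ℝ m φ x‖) 2 volume ≠ ⊤ := by
  rw [eLpNorm_norm]
  refine ((ContDiff.continuous_iteratedFDeriv ?_ hφ).memLp_of_hasCompactSupport
    (hs.iteratedFDeriv m)).eLpNorm_lt_top.ne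
  exact_mod_cast le_top

private lemma eLp_le_sum (v : (Fin 3 → ℝ) → Fin 3 → ℝ) (k : ℕ) (i : Fin 3) (m : ℕ)
    (hm : m < k + 1) (ψ : (Fin 3 → ℝ) → ℝ)
    (hψ : ∀ x, ‖ψ x‖ ≤ ‖iteratedFDeriv ℝ m (fun y => v y i) x‖) :
    eLpNorm ψ 2 volume ≤ ∑ i' : Fin 3, ∑ m' ∈ Finset.range (k+1),
      eLpNorm (fun x => ‖iteratedFDeriv ℝ m' (fun y => v y i') x‖) 2 volume := by
  have h1 : eLpNorm ψ 2 volume ≤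
      eLpNorm (fun x => ‖iteratedFDeriv ℝ m (fun y => v y i) x‖) 2 volume :=
    eLpNorm_mono fun x => by simpa using hψ x
  refine h1.trans ?_
  calc eLpNorm (fun x => ‖iteratedFDeriv ℝ m (fun y => v y i) x‖) 2 volume
      ≤ ∑ m' ∈ Finset.range (k+1),
        eLpNorm (fun x => ‖iteratedFDeriv ℝ m' (fun y => v y i) x‖) 2 volume :=
        Finset.single_le_sum
          (f := fun m' => eLpNorm (fun x => ‖iteratedFDeriv ℝ m' (fun y => v y i) x‖) 2 volume)
          (fun _ _ => zero_le) (Finset.mem_range.mpr hm)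
    _ ≤ _ := Finset.single_le_sum
        (f := fun i' => ∑ m' ∈ Finset.range (k+1),
          eLpNorm (fun x => ‖iteratedFDeriv ℝ m' (fun y => v y i') x‖) 2 volume)
        (fun _ _ => zero_le) (Finset.mem_univ i)

private lemma HV_eq (k : ℕ) (v : (Fin 3 → ℝ) → Fin 3 → ℝ)
    (h : ∀ i, ContDiff ℝ (⊤:ℕ∞) (fun y => v y i))
    (hs : ∀ i, HasCompactSupport (fun y => v y i)) :
    HV k v = (∑ i : Fin 3, ∑ m ∈ Finset.range (k + 1),
      eLpNorm (fun x => ‖iteratedFDeriv ℝ m (fun y => v y i) x‖) 2 volume).toReal := by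
  have hne : ∀ i : Fin 3, (∑ m ∈ Finset.range (k+1),
      eLpNorm (fun x => ‖iteratedFDeriv ℝ m (fun y => v y i) x‖) 2 volume) ≠ ⊤ := by
    intro i
    rw [ne_eq, ENNReal.sum_eq_top]
    push_neg
    exact fun m _ => entry_ne_top (h i) (hs i) m
  rw [HV, ENNReal.toReal_sum (fun i _ => hne i)]
  exact Finset.sum_congr rfl fun i _ =>
    (ENNReal.toReal_sum (fun m _ => entry_ne_top (h i) (hs i) m)).symm

set_option maxHeartbeats 2000000 in
/-- Estimate of the term `N₄`:
`|∫ (b·∇b)·∂₁b| ≲ ‖∂₁b‖_{H²}^{3/2} ‖∂₃b‖_{H³}^{1/2} ‖b‖_{H³}`. -/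
theorem N4_estimate :
    ∃ C > (0:ℝ), ∀ b : (Fin 3 → ℝ) → Fin 3 → ℝ,
      (∀ i, ContDiff ℝ (⊤ : ℕ∞) fun x => b x i) → HasCompactSupport b →
      (∀ x, ∑ i, pd i (fun y => b y i) x = 0) →
      |∫ x, ∑ i, (∑ j, b x j * pd j (fun y => b y i) x) * pd 0 (fun y => b y i) x| ≤
        C * HV 2 (pdv 0 b) ^ ((3:ℝ)/2) * HV 3 (pdv 2 b) ^ ((1:ℝ)/2) * HV 3 b := by
  refine ⟨32, by norm_num, fun b hb hsupp _hdiv => ?_⟩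
  have hsm : ∀ i : Fin 3, ContDiff ℝ (⊤:ℕ∞) (fun x => b x i) := fun i => (hb i).of_le (by simp)
  have hcs : ∀ i : Fin 3, HasCompactSupport (fun x => b x i) := fun i => by
    have h1 := hsupp.comp_left (g := fun w : Fin 3 → ℝ => w i) rfl
    simpa [Function.comp_def] using h1
  -- the three ENNReal Sobolev sums
  have hXsm : ∀ i, ContDiff ℝ (⊤:ℕ∞) (fun y => pdv 0 b y i) := fun i => pd_contDiff (hsm i) 0
  have hXcs : ∀ i, HasCompactSupport (fun y => pdv 0 b y i) := fun i => pd_supp (hcs i) 0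
  have hYsm : ∀ i, ContDiff ℝ (⊤:ℕ∞) (fun y => pdv 2 b y i) := fun i => pd_contDiff (hsm i) 2
  have hYcs : ∀ i, HasCompactSupport (fun y => pdv 2 b y i) := fun i => pd_supp (hcs i) 2
  rw [HV_eq 2 (pdv 0 b) hXsm hXcs, HV_eq 3 (pdv 2 b) hYsm hYcs, HV_eq 3 b hsm hcs]
  set Xe : ℝ≥0∞ := ∑ i : Fin 3, ∑ m ∈ Finset.range (2 + 1),
    eLpNorm (fun x => ‖iteratedFDeriv ℝ m (fun y => pdv 0 b y i) x‖) 2 volume with hXe_def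
  set Ye : ℝ≥0∞ := ∑ i : Fin 3, ∑ m ∈ Finset.range (3 + 1),
    eLpNorm (fun x => ‖iteratedFDeriv ℝ m (fun y => pdv 2 b y i) x‖) 2 volume with hYe_def
  set Ze : ℝ≥0∞ := ∑ i : Fin 3, ∑ m ∈ Finset.range (3 + 1),
    eLpNorm (fun x => ‖iteratedFDeriv ℝ m (fun y => b y i) x‖) 2 volume with hZe_def
  have hXne : Xe ≠ ⊤ := sum9_ne_top (fun i m => entry_ne_top (hXsm i) (hXcs i) m)
  have hYne : Ye ≠ ⊤ := sum9_ne_top (fun i m => entry_ne_top (hYsm i) (hYcs i) m)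
  have hZne : Ze ≠ ⊤ := sum9_ne_top (fun i m => entry_ne_top (hsm i) (hcs i) m)
  set K : ℝ≥0∞ := (2 * Ze * Xe) ^ ((1:ℝ)/2) * (2 * Ze * Ye) ^ ((1:ℝ)/2) *
    (2 * Xe * Xe) ^ ((1:ℝ)/2) with hK_def
  have h2ne : (2:ℝ≥0∞) ≠ ⊤ := by simp
  have hKne : K ≠ ⊤ := by
    refine ENNReal.mul_ne_top (ENNReal.mul_ne_top ?_ ?_) ?_ <;>
      exact ENNReal.rpow_ne_top_of_nonneg (by norm_num)
        (ENNReal.mul_ne_top (ENNReal.mul_ne_top h2ne (by assumption)) (by assumption))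
  -- pointwise bound on the integrand
  have hpt : ∀ x, (‖∑ i, (∑ j, b x j * pd j (fun y => b y i) x) * pd 0 (fun y => b y i) x‖₊ : ℝ≥0∞)
      ≤ ∑ i : Fin 3, ∑ j : Fin 3,
        ((‖b x j‖₊ : ℝ≥0∞) * ‖pd j (fun y => b y i) x‖₊ * ‖pd 0 (fun y => b y i) x‖₊) := by
    intro x
    have h1 : ‖∑ i, (∑ j, b x j * pd j (fun y => b y i) x) * pd 0 (fun y => b y i) x‖₊
        ≤ ∑ i : Fin 3, ∑ j : Fin 3,
          ‖b x j‖₊ * ‖pd j (fun y => b y i) x‖₊ * ‖pd 0 (fun y => b y i) x‖₊ := by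
      refine (nnnorm_sum_le _ _).trans (Finset.sum_le_sum fun i _ => ?_)
      rw [nnnorm_mul]
      calc ‖∑ j, b x j * pd j (fun y => b y i) x‖₊ * ‖pd 0 (fun y => b y i) x‖₊
          ≤ (∑ j : Fin 3, ‖b x j * pd j (fun y => b y i) x‖₊) * ‖pd 0 (fun y => b y i) x‖₊ :=
            mul_le_mul_left (nnnorm_sum_le _ _) _
        _ = ∑ j : Fin 3, ‖b x j‖₊ * ‖pd j (fun y => b y i) x‖₊ * ‖pd 0 (fun y => b y i) x‖₊ := by
            rw [Finset.sum_mul]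
            exact Finset.sum_congr rfl fun j _ => by rw [nnnorm_mul]
    refine le_trans (ENNReal.coe_le_coe.mpr h1) (le_of_eq ?_)
    simp only [ENNReal.coe_finset_sum, ENNReal.coe_mul]
  -- measurability of summands
  have msum : ∀ i j : Fin 3, Measurable fun x =>
      ((‖b x j‖₊ : ℝ≥0∞) * ‖pd j (fun y => b y i) x‖₊ * ‖pd 0 (fun y => b y i) x‖₊) := by
    intro i j
    have c1 : Continuous fun x => b x j := (hsm j).continuous
    have c2 : Continuous (pd j (fun y => b y i)) := (pd_contDiff (hsm i) j).continuous
    have c3 : Continuous (pd 0 (fun y => b y i)) := (pd_contDiff (hsm i) 0).continuous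
    exact (((ENNReal.continuous_coe.comp c1.nnnorm).measurable.mul
      (ENNReal.continuous_coe.comp c2.nnnorm).measurable).mul
      (ENNReal.continuous_coe.comp c3.nnnorm).measurable)
  -- the trilinear bound for each pair
  have hK1 : ∀ i j : Fin 3, (∫⁻ x,
      ((‖b x j‖₊ : ℝ≥0∞) * ‖pd j (fun y => b y i) x‖₊ * ‖pd 0 (fun y => b y i) x‖₊)) ≤ K := by
    intro i j
    have t := trilinear_pi (hsm j) (pd_contDiff (hsm i) j) (pd_contDiff (hsm i) 0)
      (hcs j) (pd_supp (hcs i) j) (pd_supp (hcs i) 0)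
    refine t.trans ?_
    have e1 : eLpNorm (fun x => b x j) 2 volume ≤ Ze :=
      eLp_le_sum b 3 j 0 (by norm_num) _
        (fun x => le_of_eq (norm_iteratedFDeriv_zero (f := fun y => b y j) (x := x)).symm)
    have e2 : eLpNorm (pd 0 (fun y => b y j)) 2 volume ≤ Xe :=
      eLp_le_sum (pdv 0 b) 2 j 0 (by norm_num) _
        (fun x => le_of_eq (norm_iteratedFDeriv_zero (f := fun y => pdv 0 b y j) (x := x)).symm)
    have e3 : eLpNorm (pd j (fun y => b y i)) 2 volume ≤ Ze :=
      eLp_le_sum b 3 i 1 (by norm_num) _ (fun x => pd_le_iter j x)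
    have e4 : eLpNorm (pd 2 (pd j (fun y => b y i))) 2 volume ≤ Ye := by
      refine eLp_le_sum (pdv 2 b) 3 i 1 (by norm_num) _ (fun x => ?_)
      rw [show pd 2 (pd j (fun y => b y i)) x = pd j (pd 2 (fun y => b y i)) x from
        pd_swap (hsm i) 2 j x]
      exact pd_le_iter j x
    have e5 : eLpNorm (pd 0 (fun y => b y i)) 2 volume ≤ Xe :=
      eLp_le_sum (pdv 0 b) 2 i 0 (by norm_num) _
        (fun x => le_of_eq (norm_iteratedFDeriv_zero (f := fun y => pdv 0 b y i) (x := x)).symm)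
    have e6 : eLpNorm (pd 1 (pd 0 (fun y => b y i))) 2 volume ≤ Xe :=
      eLp_le_sum (pdv 0 b) 2 i 1 (by norm_num) _ (fun x => pd_le_iter 1 x)
    refine mul_le_mul' (mul_le_mul' ?_ ?_) ?_
    · exact ENNReal.rpow_le_rpow (mul_le_mul' (mul_le_mul' le_rfl e1) e2) (by norm_num)
    · exact ENNReal.rpow_le_rpow (mul_le_mul' (mul_le_mul' le_rfl e3) e4) (by norm_num)
    · exact ENNReal.rpow_le_rpow (mul_le_mul' (mul_le_mul' le_rfl e5) e6) (by norm_num)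
  -- total bound in ℝ≥0∞
  have hL : (∫⁻ x, (‖∑ i, (∑ j, b x j * pd j (fun y => b y i) x) *
      pd 0 (fun y => b y i) x‖₊ : ℝ≥0∞)) ≤ 9 * K := by
    calc (∫⁻ x, (‖∑ i, (∑ j, b x j * pd j (fun y => b y i) x) * pd 0 (fun y => b y i) x‖₊ : ℝ≥0∞))
        ≤ ∫⁻ x, ∑ i : Fin 3, ∑ j : Fin 3,
            ((‖b x j‖₊ : ℝ≥0∞) * ‖pd j (fun y => b y i) x‖₊ * ‖pd 0 (fun y => b y i) x‖₊) :=
          lintegral_mono hpt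
      _ = ∑ i : Fin 3, ∑ j : Fin 3, ∫⁻ x,
            ((‖b x j‖₊ : ℝ≥0∞) * ‖pd j (fun y => b y i) x‖₊ * ‖pd 0 (fun y => b y i) x‖₊) := by
          rw [lintegral_finset_sum _ (fun i _ => Finset.measurable_sum _ (fun j _ => msum i j))]
          exact Finset.sum_congr rfl fun i _ => lintegral_finset_sum _ (fun j _ => msum i j)
      _ ≤ ∑ _i : Fin 3, ∑ _j : Fin 3, K :=
          Finset.sum_le_sum fun i _ => Finset.sum_le_sum fun j _ => hK1 i j
      _ = 9 * K := by
          simp only [Finset.sum_const, Finset.card_univ, Fintype.card_fin, smul_smul,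
            nsmul_eq_mul]
          rw [← mul_assoc]
          norm_num
  -- from Bochner integral to lintegral
  have habs : |∫ x, ∑ i, (∑ j, b x j * pd j (fun y => b y i) x) * pd 0 (fun y => b y i) x|
      ≤ (∫⁻ x, (‖∑ i, (∑ j, b x j * pd j (fun y => b y i) x) *
          pd 0 (fun y => b y i) x‖₊ : ℝ≥0∞)).toReal := by
    have h := norm_integral_le_lintegral_norm
      (fun x => ∑ i, (∑ j, b x j * pd j (fun y => b y i) x) * pd 0 (fun y => b y i) x)
      (μ := volume)
    rw [Real.norm_eq_abs] at h
    refine h.trans (le_of_eq ?_)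
    congr 1
    refine lintegral_congr fun x => ?_
    rw [ofReal_norm, enorm_eq_nnnorm]
  have h9Kne : (9:ℝ≥0∞) * K ≠ ⊤ := ENNReal.mul_ne_top (by simp) hKne
  refine habs.trans ?_
  have hstep : ((∫⁻ x, (‖∑ i, (∑ j, b x j * pd j (fun y => b y i) x) *
      pd 0 (fun y => b y i) x‖₊ : ℝ≥0∞))).toReal ≤ ((9:ℝ≥0∞) * K).toReal :=
    ENNReal.toReal_mono h9Kne hL
  refine hstep.trans ?_
  -- compute the toReal and finish with real arithmetic
  have hKt : ((9:ℝ≥0∞) * K).toReal =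
      9 * ((2 * Ze.toReal * Xe.toReal) ^ ((1:ℝ)/2) * (2 * Ze.toReal * Ye.toReal) ^ ((1:ℝ)/2) *
        (2 * Xe.toReal * Xe.toReal) ^ ((1:ℝ)/2)) := by
    rw [ENNReal.toReal_mul, hK_def, ENNReal.toReal_mul, ENNReal.toReal_mul,
      ← ENNReal.toReal_rpow, ← ENNReal.toReal_rpow, ← ENNReal.toReal_rpow,
      ENNReal.toReal_mul, ENNReal.toReal_mul, ENNReal.toReal_mul, ENNReal.toReal_mul,
      ENNReal.toReal_mul, ENNReal.toReal_mul]
    norm_num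
  rw [hKt]
  exact real_final ENNReal.toReal_nonneg ENNReal.toReal_nonneg ENNReal.toReal_nonneg
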